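/- The derivation relation ⊢_S (the direct derivation relation determined by the rule set S) is sound and complete for the fragment S: for every set Θ of S-formulas and every S-formula θ, Θ ⊢_S θ if and only if Θ ⊨ θ. -/
import Mathlib


/-!
Syllogistic logics (Pratt-Hartmann & Moss, "Logics for the Relational Syllogistic").

Unary atoms and binary atoms are encoded by `ℕ` (two disjoint copies).
-/

namespace Syllogistic

/-- Unary literals: a unary atom `p` or its negation `p̄`. -/
inductive Lit : Type
  | pos : ℕ → Lit
  | neg : ℕ → Lit
deriving DecidableEq

/-- Binary literals: a binary atom `r` or its negation `r̄`. -/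
inductive BLit : Type
  | pos : ℕ → BLit
  | neg : ℕ → BLit
deriving DecidableEq

/-- Bar (negation) on unary literals. -/
def Lit.bar : Lit → Lit
  | .pos p => .neg p
  | .neg p => .pos p

/-- Bar (negation) on binary literals. -/
def BLit.bar : BLit → BLit
  | .pos r => .neg r
  | .neg r => .pos r

/-- A unary literal is positive if it is an atom. -/
def Lit.isPos : Lit → Prop
  | .pos _ => True
  | .neg _ => False

/-- A binary literal is positive if it is an atom. -/
def BLit.isPos : BLit → Prop
  | .pos _ => True
  | .neg _ => False

/-- e-terms: a unary literal `l`, or `∃(l,t)`, or `∀(l,t)`. -/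
inductive ETerm : Type
  | lit : Lit → ETerm
  | ex : Lit → BLit → ETerm
  | al : Lit → BLit → ETerm
deriving DecidableEq

/-- The e-term consisting of a single positive unary atom. -/
def atomE (p : ℕ) : ETerm := .lit (.pos p)

/-- Bar on e-terms: `∀(l,t)‾ = ∃(l,t̄)` and `∃(l,t)‾ = ∀(l,t̄)`. -/
def ETerm.bar : ETerm → ETerm
  | .lit l => .lit l.bar
  | .ex l t => .al l t.bar
  | .al l t => .ex l t.bar

/-- c-terms: a unary literal, or `∃(p,t)`/`∀(p,t)` with `p` a unary atom. -/
def ETerm.isC : ETerm → Prop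
  | .lit _ => True
  | .ex l _ => l.isPos
  | .al l _ => l.isPos

/-- Positive c-terms: the literals occurring in them are positive. -/
def ETerm.isPosC : ETerm → Prop
  | .lit l => l.isPos
  | .ex l t => l.isPos ∧ t.isPos
  | .al l t => l.isPos ∧ t.isPos

/-- R*†-formulas: `∃(e,f)` or `∀(e,f)` for e-terms `e`, `f`. -/
inductive Formula : Type
  | ex : ETerm → ETerm → Formula
  | al : ETerm → ETerm → Formula
deriving DecidableEq

/-- Negation of a formula: `∀(e,f)‾ = ∃(e,f̄)`, `∃(e,f)‾ = ∀(e,f̄)`. -/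
def Formula.bar : Formula → Formula
  | .ex e f => .al e f.bar
  | .al e f => .ex e f.bar

/-- The silent identification: `∃(e,f)` with `∃(f,e)`, and `∀(e,f)` with `∀(f̄,ē)`. -/
def Formula.swap : Formula → Formula
  | .ex e f => .ex f e
  | .al e f => .al f.bar e.bar

/-- Two formulas are identified if they are equal or are swaps of each other. -/
def FormEquiv (φ ψ : Formula) : Prop := ψ = φ ∨ ψ = φ.swap

/-- An absurdity is a formula of the form `∃(e,ē)`. -/
def IsAbsurd (φ : Formula) : Prop := ∃ e : ETerm, φ = .ex e e.bar

/-- A substitution maps unary atoms to unary atoms and binary atoms to binary atoms. -/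
structure Subst where
  u : ℕ → ℕ
  b : ℕ → ℕ

def Lit.subst (g : Subst) : Lit → Lit
  | .pos p => .pos (g.u p)
  | .neg p => .neg (g.u p)

def BLit.subst (g : Subst) : BLit → BLit
  | .pos r => .pos (g.b r)
  | .neg r => .neg (g.b r)

def ETerm.subst (g : Subst) : ETerm → ETerm
  | .lit l => .lit (l.subst g)
  | .ex l t => .ex (l.subst g) (t.subst g)
  | .al l t => .al (l.subst g) (t.subst g)

/-- Atom-wise application of a substitution to a formula. -/
def Formula.subst (g : Subst) : Formula → Formula
  | .ex e f => .ex (e.subst g) (f.subst g)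
  | .al e f => .al (e.subst g) (f.subst g)

/-- A structure over a domain `A`: an interpretation of every unary atom as a
subset of `A` and of every binary atom as a binary relation on `A`.
(Non-emptiness of the domain is imposed where structures are quantified over.) -/
structure Interp (A : Type) where
  up : ℕ → Set A
  br : ℕ → Set (A × A)

def Interp.litI {A : Type} (M : Interp A) : Lit → Set A
  | .pos p => M.up p
  | .neg p => (M.up p)ᶜ

def Interp.blitI {A : Type} (M : Interp A) : BLit → Set (A × A)
  | .pos r => M.br r
  | .neg r => (M.br r)ᶜ

/-- Interpretation of e-terms. -/
def Interp.etermI {A : Type} (M : Interp A) : ETerm → Set A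
  | .lit l => M.litI l
  | .ex l t => {a | ∃ b ∈ M.litI l, (a, b) ∈ M.blitI t}
  | .al l t => {a | ∀ b ∈ M.litI l, (a, b) ∈ M.blitI t}

/-- Truth of a formula in a structure. -/
def Interp.Sat {A : Type} (M : Interp A) : Formula → Prop
  | .al e f => M.etermI e ⊆ M.etermI f
  | .ex e f => (M.etermI e ∩ M.etermI f).Nonempty

/-- Truth of a set of formulas in a structure. -/
def Interp.SatSet {A : Type} (M : Interp A) (Θ : Set Formula) : Prop :=
  ∀ θ ∈ Θ, M.Sat θ

/-- `Θ ⊨ θ`: every structure (with non-empty domain) satisfying `Θ` satisfies `θ`. -/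
def Entails (Θ : Set Formula) (θ : Formula) : Prop :=
  ∀ (A : Type), Nonempty A → ∀ M : Interp A, M.SatSet Θ → M.Sat θ

/-- `Θ` is satisfied in some structure with non-empty domain. -/
def Satisfiable (Θ : Set Formula) : Prop :=
  ∃ (A : Type), Nonempty A ∧ ∃ M : Interp A, M.SatSet Θ

/-- A syllogistic rule: a finite set of antecedents together with a consequent. -/
structure SylRule where
  ants : Finset Formula
  con : Formula

/-- A rule is sound if its antecedents entail its consequent. -/
def SylRule.Sound (R : SylRule) : Prop := Entails (↑R.ants) R.con

/-- A rule is a rule *in* the fragment `F` if all its formulas lie in `F`. -/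
def RuleIn (F : Set Formula) (R : SylRule) : Prop :=
  (∀ ψ ∈ R.ants, ψ ∈ F) ∧ R.con ∈ F

/-- The instance of a rule under a substitution. -/
def SylRule.inst (g : Subst) (R : SylRule) : SylRule :=
  ⟨R.ants.image (Formula.subst g), R.con.subst g⟩

/-- Two rules are the same modulo the identification of formulas. -/
def RuleEquiv (R R' : SylRule) : Prop :=
  (∀ ψ ∈ R.ants, ∃ ψ' ∈ R'.ants, FormEquiv ψ ψ') ∧
  (∀ ψ' ∈ R'.ants, ∃ ψ ∈ R.ants, FormEquiv ψ ψ') ∧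
  FormEquiv R.con R'.con

/-- The direct derivation relation `⊢_X` determined by a set `X` of syllogistic
rules: premises may be used, and instances of rules applied; formulas are
treated up to the silent identification. -/
inductive Derives (X : Set SylRule) : Set Formula → Formula → Prop
  | mem {Θ : Set Formula} {θ : Formula} : θ ∈ Θ → Derives X Θ θ
  | rule {Θ : Set Formula} (R : SylRule) (g : Subst) :
      R ∈ X → (∀ ψ ∈ R.ants, Derives X Θ (ψ.subst g)) →
      Derives X Θ (R.con.subst g)
  | ident {Θ : Set Formula} {φ ψ : Formula} :
      Derives X Θ φ → FormEquiv φ ψ → Derives X Θ ψ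

/-- The indirect derivation relation `⊩_X`: as `⊢_X`, together with
*reductio ad absurdum*. -/
inductive IDerives (X : Set SylRule) : Set Formula → Formula → Prop
  | mem {Θ : Set Formula} {θ : Formula} : θ ∈ Θ → IDerives X Θ θ
  | rule {Θ : Set Formula} (R : SylRule) (g : Subst) :
      R ∈ X → (∀ ψ ∈ R.ants, IDerives X Θ (ψ.subst g)) →
      IDerives X Θ (R.con.subst g)
  | ident {Θ : Set Formula} {φ ψ : Formula} :
      IDerives X Θ φ → FormEquiv φ ψ → IDerives X Θ ψ
  | raa {Θ : Set Formula} {θ b : Formula} :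
      IsAbsurd b → IDerives X (Θ ∪ {θ.bar}) b → IDerives X Θ θ

/-- Soundness of a derivation relation for the fragment `F`. -/
def SoundFor (F : Set Formula) (D : Set Formula → Formula → Prop) : Prop :=
  ∀ (Θ : Set Formula) (θ : Formula), Θ ⊆ F → θ ∈ F → D Θ θ → Entails Θ θ

/-- Completeness of a derivation relation for the fragment `F`. -/
def CompleteFor (F : Set Formula) (D : Set Formula → Formula → Prop) : Prop :=
  ∀ (Θ : Set Formula) (θ : Formula), Θ ⊆ F → θ ∈ F → Entails Θ θ → D Θ θ

/-- Refutation-completeness for the fragment `F`: every unsatisfiable set of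
`F`-formulas derives some absurdity. -/
def RefutationCompleteFor (F : Set Formula) (D : Set Formula → Formula → Prop) : Prop :=
  ∀ Θ : Set Formula, Θ ⊆ F → ¬ Satisfiable Θ → ∃ b, IsAbsurd b ∧ D Θ b

/-- Consistency of a set of formulas with respect to `⊩_X`. -/
def Consistent (X : Set SylRule) (Θ : Set Formula) : Prop :=
  ¬ ∃ b, IsAbsurd b ∧ IDerives X Θ b

/-! ### The six fragments -/

/-- The fragment `S`: `∃(p,l)`, `∃(l,p)`, `∀(p,l)`, `∀(l,p̄)`. -/
def FragS : Set Formula :=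
  {φ | (∃ (p : ℕ) (l : Lit), φ = .ex (atomE p) (.lit l)) ∨
       (∃ (p : ℕ) (l : Lit), φ = .ex (.lit l) (atomE p)) ∨
       (∃ (p : ℕ) (l : Lit), φ = .al (atomE p) (.lit l)) ∨
       (∃ (p : ℕ) (l : Lit), φ = .al (.lit l) (.lit (.neg p)))}

/-- The fragment `S†`: `∃(l,m)`, `∀(l,m)` for unary literals `l`, `m`. -/
def FragSdag : Set Formula :=
  {φ | ∃ l m : Lit, φ = .ex (.lit l) (.lit m) ∨ φ = .al (.lit l) (.lit m)}

/-- The fragment `R`: `∃(p,c)`, `∃(c,p)`, `∀(p,c)`, `∀(c,p̄)` for a c-term `c`. -/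
def FragR : Set Formula :=
  {φ | ∃ (p : ℕ) (c : ETerm), c.isC ∧
       (φ = .ex (atomE p) c ∨ φ = .ex c (atomE p) ∨
        φ = .al (atomE p) c ∨ φ = .al c (.lit (.neg p)))}

/-- The fragment `R†`: `∃(l,e)`, `∃(e,l)`, `∀(l,e)`, `∀(e,l)` for an e-term `e`. -/
def FragRdag : Set Formula :=
  {φ | ∃ (l : Lit) (e : ETerm),
       φ = .ex (.lit l) e ∨ φ = .ex e (.lit l) ∨
       φ = .al (.lit l) e ∨ φ = .al e (.lit l)}

/-- The fragment `R*`: `∃(c⁺,d)`, `∃(d,c⁺)`, `∀(c⁺,d)`, `∀(d,c⁺‾)` with `c⁺` a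
positive c-term and `d` a c-term. -/
def FragRstar : Set Formula :=
  {φ | ∃ c d : ETerm, c.isPosC ∧ d.isC ∧
       (φ = .ex c d ∨ φ = .ex d c ∨ φ = .al c d ∨ φ = .al d c.bar)}

/-- The fragment `R*†`: all formulas. -/
def FragRstardag : Set Formula := Set.univ

/-- The six syllogistic fragments. -/
def IsFragment (F : Set Formula) : Prop :=
  F = FragS ∨ F = FragSdag ∨ F = FragR ∨ F = FragRdag ∨ F = FragRstar ∨ F = FragRstardag

/-! ### Rule sets -/

/-- The rule set `S`: (D1), (D2), (D3), (B), (A), (T), (I), (X). -/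
def RuleSetS : Set SylRule :=
  {R | (∃ (p q : ℕ) (l : Lit),
          R = ⟨{.al (atomE q) (.lit l), .ex (atomE p) (atomE q)}, .ex (atomE p) (.lit l)⟩) ∨
       (∃ (p q : ℕ) (l : Lit),
          R = ⟨{.ex (atomE p) (.lit l), .al (atomE p) (atomE q)}, .ex (atomE q) (.lit l)⟩) ∨
       (∃ (p q : ℕ) (l : Lit),
          R = ⟨{.al (atomE q) (.lit l.bar), .ex (atomE p) (.lit l)}, .ex (atomE p) (.lit (.neg q))⟩) ∨
       (∃ (p q : ℕ) (l : Lit),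
          R = ⟨{.al (atomE p) (atomE q), .al (atomE q) (.lit l)}, .al (atomE p) (.lit l)⟩) ∨
       (∃ (p : ℕ) (l : Lit),
          R = ⟨{.al (atomE p) (.lit (.neg p))}, .al (atomE p) (.lit l)⟩) ∨
       (∃ p : ℕ, R = ⟨∅, .al (atomE p) (atomE p)⟩) ∨
       (∃ (p : ℕ) (l : Lit),
          R = ⟨{.ex (atomE p) (.lit l)}, .ex (atomE p) (atomE p)⟩) ∨
       (∃ φ ψ : Formula, φ ∈ FragS ∧ ψ ∈ FragS ∧ R = ⟨{ψ, ψ.bar}, φ⟩)}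

/-- The rule set `S†`: (D), (B), (A), (T), (I), (N), (X). -/
def RuleSetSdag : Set SylRule :=
  {R | (∃ l m n : Lit,
          R = ⟨{.ex (.lit l) (.lit n), .al (.lit l) (.lit m)}, .ex (.lit m) (.lit n)⟩) ∨
       (∃ l m n : Lit,
          R = ⟨{.al (.lit l) (.lit m), .al (.lit m) (.lit n)}, .al (.lit l) (.lit n)⟩) ∨
       (∃ l m : Lit, R = ⟨{.al (.lit l) (.lit l.bar)}, .al (.lit l) (.lit m)⟩) ∨
       (∃ l : Lit, R = ⟨∅, .al (.lit l) (.lit l)⟩) ∨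
       (∃ l m : Lit, R = ⟨{.ex (.lit l) (.lit m)}, .ex (.lit l) (.lit l)⟩) ∨
       (∃ l : Lit, R = ⟨{.al (.lit l.bar) (.lit l)}, .ex (.lit l) (.lit l)⟩) ∨
       (∃ φ ψ : Formula, φ ∈ FragSdag ∧ ψ ∈ FragSdag ∧ R = ⟨{ψ, ψ.bar}, φ⟩)}

/-- The rules (B), (T) and (A) of the rule set `S†`. -/
def RuleSetBTA : Set SylRule :=
  {R | (∃ l m n : Lit,
          R = ⟨{.al (.lit l) (.lit m), .al (.lit m) (.lit n)}, .al (.lit l) (.lit n)⟩) ∨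
       (∃ l : Lit, R = ⟨∅, .al (.lit l) (.lit l)⟩) ∨
       (∃ l m : Lit, R = ⟨{.al (.lit l) (.lit l.bar)}, .al (.lit l) (.lit m)⟩)}

/-- The rule set `R`: (D1), (D2), (D3), (B), (T), (I), (A), (II), (∀∀), (∃∃), (∀∃). -/
def RuleSetR : Set SylRule :=
  {R | (∃ (p q : ℕ) (c : ETerm), c.isC ∧
          R = ⟨{.ex (atomE p) (atomE q), .al (atomE q) c}, .ex (atomE p) c⟩) ∨
       (∃ (p q : ℕ) (c : ETerm), c.isC ∧
          R = ⟨{.al (atomE p) (atomE q), .ex (atomE p) c}, .ex (atomE q) c⟩) ∨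
       (∃ (p q : ℕ) (c : ETerm), c.isC ∧
          R = ⟨{.al (atomE q) c.bar, .ex (atomE p) c}, .ex (atomE p) (.lit (.neg q))⟩) ∨
       (∃ (p q : ℕ) (c : ETerm), c.isC ∧
          R = ⟨{.al (atomE p) (atomE q), .al (atomE q) c}, .al (atomE p) c⟩) ∨
       (∃ p : ℕ, R = ⟨∅, .al (atomE p) (atomE p)⟩) ∨
       (∃ (p : ℕ) (c : ETerm), c.isC ∧
          R = ⟨{.ex (atomE p) c}, .ex (atomE p) (atomE p)⟩) ∨
       (∃ (p : ℕ) (c : ETerm), c.isC ∧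
          R = ⟨{.al (atomE p) (.lit (.neg p))}, .al (atomE p) c⟩) ∨
       (∃ (p q : ℕ) (t : BLit),
          R = ⟨{.ex (atomE p) (.ex (.pos q) t)}, .ex (atomE q) (atomE q)⟩) ∨
       (∃ (p q q' : ℕ) (t : BLit),
          R = ⟨{.al (atomE p) (.al (.pos q') t), .ex (atomE q) (atomE q')},
               .al (atomE p) (.ex (.pos q) t)⟩) ∨
       (∃ (p q q' : ℕ) (t : BLit),
          R = ⟨{.ex (atomE p) (.ex (.pos q) t), .al (atomE q) (atomE q')},
               .ex (atomE p) (.ex (.pos q') t)⟩) ∨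
       (∃ (p q q' : ℕ) (t : BLit),
          R = ⟨{.al (atomE p) (.ex (.pos q) t), .al (atomE q) (atomE q')},
               .al (atomE p) (.ex (.pos q') t)⟩)}

/-- The rule set `R*`: (T), (I), (B), (D1), (D2), (J), (K), (L), (II), (Z), (W). -/
def RuleSetRstar : Set SylRule :=
  {R | (∃ c : ETerm, c.isPosC ∧ R = ⟨∅, .al c c⟩) ∨
       (∃ c d : ETerm, c.isPosC ∧ d.isC ∧ R = ⟨{.ex c d}, .ex c c⟩) ∨
       (∃ b c d : ETerm, b.isPosC ∧ c.isPosC ∧ d.isC ∧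
          R = ⟨{.al b c, .al c d}, .al b d⟩) ∨
       (∃ b c d : ETerm, b.isPosC ∧ c.isPosC ∧ d.isC ∧
          R = ⟨{.ex b c, .al c d}, .ex b d⟩) ∨
       (∃ b c d : ETerm, b.isPosC ∧ c.isPosC ∧ d.isC ∧
          R = ⟨{.al b c, .ex b d}, .ex c d⟩) ∨
       (∃ p q r : ℕ,
          R = ⟨{.al (atomE p) (atomE q)},
               .al (.al (.pos q) (.pos r)) (.al (.pos p) (.pos r))⟩) ∨
       (∃ p q r : ℕ,
          R = ⟨{.al (atomE p) (atomE q)},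
               .al (.ex (.pos p) (.pos r)) (.ex (.pos q) (.pos r))⟩) ∨
       (∃ p q r : ℕ,
          R = ⟨{.ex (atomE p) (atomE q)},
               .al (.al (.pos p) (.pos r)) (.ex (.pos q) (.pos r))⟩) ∨
       (∃ p q r : ℕ,
          R = ⟨{.ex (atomE q) (.ex (.pos p) (.pos r))}, .ex (atomE p) (atomE p)⟩) ∨
       (∃ (p r : ℕ) (c : ETerm), c.isPosC ∧
          R = ⟨{.al (atomE p) (.lit (.neg p))}, .al c (.al (.pos p) (.pos r))⟩) ∨
       (∃ p r : ℕ,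
          R = ⟨{.al (atomE p) (.lit (.neg p))},
               .ex (.al (.pos p) (.pos r)) (.al (.pos p) (.pos r))⟩)}

/-! ### Auxiliary notions for particular statements -/

/-- Universal S†-formulas. -/
def IsUnivSdag (φ : Formula) : Prop := ∃ l m : Lit, φ = .al (.lit l) (.lit m)

/-- Existential S†-formulas. -/
def IsExSdag (φ : Formula) : Prop := ∃ l m : Lit, φ = .ex (.lit l) (.lit m)

/-- The closure `V^Φ` of a set of unary literals: all `m` with
`Φ ⊢_BTA ∀(l,m)` for some `l ∈ V`. -/
def litClosure (Φ : Set Formula) (V : Set Lit) : Set Lit :=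
  {m | ∃ l ∈ V, Derives RuleSetBTA Φ (.al (.lit l) (.lit m))}

/-- Membership in a set of formulas, modulo the silent identification. -/
def MemMod (Γ : Set Formula) (φ : Formula) : Prop := ∃ ψ ∈ Γ, FormEquiv φ ψ

/-- The reachability relation `c ⇒ d` determined by `Γ`. -/
def Reach (Γ : Set Formula) (c d : ETerm) : Prop :=
  c = d ∨ ∃ (k : ℕ) (p : ℕ → ℕ), c = atomE (p 0) ∧
    MemMod Γ (.al (atomE (p k)) d) ∧
    ∀ i < k, MemMod Γ (.al (atomE (p i)) (atomE (p (i + 1))))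

/-- `V ⇒ d` for a set `V` of c-terms. -/
def ReachSet (Γ : Set Formula) (V : Set ETerm) (d : ETerm) : Prop :=
  ∃ c ∈ V, Reach Γ c d

/-- The witness sets `B_k`; the formal object `b_{V,i}` is encoded as the
pair `(V, i)`. -/
def BSet (Γ : Set Formula) : ℕ → Set (Set ETerm × ℕ)
  | 0 => {x | ∃ (p : ℕ) (c : ETerm), c.isC ∧ MemMod Γ (.ex (atomE p) c) ∧
            x = ({atomE p, c}, 0)}
  | k + 1 => BSet Γ k ∪
      {x | ∃ (p i : ℕ), (i = 1 ∨ i = 2) ∧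
        (∃ y ∈ BSet Γ k, ∃ t : BLit, ReachSet Γ y.1 (.ex (.pos p) t)) ∧
        x = ({atomE p}, i)}

/-- The witness set `B = ⋃_k B_k`. -/
def BAll (Γ : Set Formula) : Set (Set ETerm × ℕ) := ⋃ k, BSet Γ k

/-- Condition (C). -/
def CondC (Γ : Set Formula) : Prop :=
  ∃ (V : Set ETerm) (i : ℕ) (W : Set ETerm) (j : ℕ),
    (V, i) ∈ BAll Γ ∧ (W, j) ∈ BAll Γ ∧
    ∃ q o r : ℕ,
      ((ReachSet Γ V (atomE q) ∧ ReachSet Γ V (.lit (.neg q))) ∨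
       (ReachSet Γ V (.ex (.pos q) (.neg r)) ∧ ReachSet Γ V (.al (.pos o) (.pos r)) ∧
         Reach Γ (atomE q) (atomE o)) ∨
       (ReachSet Γ V (.al (.pos q) (.neg r)) ∧ ReachSet Γ V (.ex (.pos o) (.pos r)) ∧
         Reach Γ (atomE o) (atomE q)) ∨
       (ReachSet Γ V (.al (.pos q) (.neg r)) ∧ ReachSet Γ V (.al (.pos o) (.pos r)) ∧
         ReachSet Γ W (atomE q) ∧ ReachSet Γ W (atomE o)))

/-- The set `Γ` of R-formulas used in the proof that `R` admits no sound
and complete direct syllogistic system (indices `0,…,n-1`). -/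
def GammaSet (n : ℕ) (p : ℕ → ℕ) (r : ℕ) : Set Formula :=
  {φ | (∃ i, i + 1 < n ∧ φ = .al (atomE (p i)) (.ex (.pos (p (i + 1))) (.pos r))) ∨
       φ = .al (atomE (p 0)) (.al (.pos (p (n - 1))) (.pos r)) ∨
       (∃ q : ℕ, φ = .al (atomE q) (atomE q)) ∨
       (∃ i j, i < j ∧ j < n ∧ φ = .al (atomE (p i)) (.lit (.neg (p j))))}

/-- `Γ` is R*-complete: for every R*-formula `θ`, `θ ∈ Γ` or `θ̄ ∈ Γ`. -/
def RstarComplete (Γ : Set Formula) : Prop :=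
  ∀ θ ∈ FragRstar, θ ∈ Γ ∨ Formula.bar θ ∈ Γ

/-- Domain of the canonical structure for `Γ`: triples `(c₁,c₂,Q)` of two
positive c-terms and a quantifier (`Bool`, with `true` rendering `∃` and
`false` rendering `∀`) such that `Γ ⊩_{R*} ∃(c₁,c₂)`. -/
abbrev CanonA (Γ : Set Formula) : Type :=
  {x : ETerm × ETerm × Bool //
    x.1.isPosC ∧ x.2.1.isPosC ∧ IDerives RuleSetRstar Γ (.ex x.1 x.2.1)}

/-- The canonical structure constructed from `Γ`. -/
def CanonInterp (Γ : Set Formula) : Interp (CanonA Γ) where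
  up p := {x | IDerives RuleSetRstar Γ (.al x.val.1 (atomE p)) ∨
               IDerives RuleSetRstar Γ (.al x.val.2.1 (atomE p))}
  br r := {ab |
      (∃ c ∈ ({ab.1.val.1, ab.1.val.2.1} : Set ETerm),
       ∃ d ∈ ({ab.2.val.1, ab.2.val.2.1} : Set ETerm),
       ∃ q : ℕ,
         IDerives RuleSetRstar Γ (.al c (.al (.pos q) (.pos r))) ∧
         IDerives RuleSetRstar Γ (.al d (atomE q))) ∨
      (ab.2.val.2.2 = true ∧
       ∃ q : ℕ, ab.2.val.1 = atomE q ∧ ab.2.val.2.1 = atomE q ∧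
       ∃ c ∈ ({ab.1.val.1, ab.1.val.2.1} : Set ETerm),
         IDerives RuleSetRstar Γ (.al c (.ex (.pos q) (.pos r))))}


/-! ### Auxiliary development for Statement 1 -/

@[simp] lemma Lit.bar_bar (l : Lit) : l.bar.bar = l := by cases l <;> rfl
@[simp] lemma BLit.bar_bar (t : BLit) : t.bar.bar = t := by cases t <;> rfl
@[simp] lemma ETerm.bar_bar (e : ETerm) : e.bar.bar = e := by
  cases e <;> simp [ETerm.bar]
@[simp] lemma Formula.swap_swap (φ : Formula) : φ.swap.swap = φ := by
  cases φ <;> simp [Formula.swap]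

lemma formEquiv_symm {φ ψ : Formula} (h : FormEquiv φ ψ) : FormEquiv ψ φ := by
  rcases h with rfl | rfl
  · exact Or.inl rfl
  · exact Or.inr (Formula.swap_swap φ).symm

/-- Normal-form universal S-formula. -/
def fAll (p : ℕ) (l : Lit) : Formula := .al (atomE p) (.lit l)
/-- Normal-form existential S-formula. -/
def fEx (p : ℕ) (l : Lit) : Formula := .ex (atomE p) (.lit l)

lemma fAll_mem (p : ℕ) (l : Lit) : fAll p l ∈ FragS :=
  Or.inr (Or.inr (Or.inl ⟨p, l, rfl⟩))
lemma fEx_mem (p : ℕ) (l : Lit) : fEx p l ∈ FragS := Or.inl ⟨p, l, rfl⟩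

lemma normalizeS {θ : Formula} (h : θ ∈ FragS) :
    ∃ (p : ℕ) (l : Lit), FormEquiv θ (fEx p l) ∨ FormEquiv θ (fAll p l) := by
  rcases h with ⟨p, l, rfl⟩ | ⟨p, l, rfl⟩ | ⟨p, l, rfl⟩ | ⟨p, l, rfl⟩
  · exact ⟨p, l, Or.inl (Or.inl rfl)⟩
  · exact ⟨p, l, Or.inl (Or.inr rfl)⟩
  · exact ⟨p, l, Or.inr (Or.inl rfl)⟩
  · cases l with
    | pos q => exact ⟨q, .neg p, Or.inr (Or.inl rfl)⟩
    | neg q => exact ⟨p, .pos q, Or.inr (Or.inr rfl)⟩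

/-! #### Substitution lemmas -/

def idSubst : Subst := ⟨id, id⟩

@[simp] lemma Lit.subst_id (l : Lit) : l.subst idSubst = l := by cases l <;> rfl
@[simp] lemma BLit.subst_id (t : BLit) : t.subst idSubst = t := by cases t <;> rfl
@[simp] lemma ETerm.subst_id (e : ETerm) : e.subst idSubst = e := by
  cases e <;> simp [ETerm.subst]
@[simp] lemma Formula.subst_id (φ : Formula) : φ.subst idSubst = φ := by
  cases φ <;> simp [Formula.subst]

lemma Lit.subst_bar (g : Subst) (l : Lit) : l.bar.subst g = (l.subst g).bar := by
  cases l <;> rfl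
lemma BLit.subst_bar (g : Subst) (t : BLit) : t.bar.subst g = (t.subst g).bar := by
  cases t <;> rfl
lemma ETerm.subst_bar (g : Subst) (e : ETerm) : e.bar.subst g = (e.subst g).bar := by
  cases e <;> simp [ETerm.bar, ETerm.subst, Lit.subst_bar, BLit.subst_bar]
lemma Formula.subst_bar (g : Subst) (φ : Formula) : φ.bar.subst g = (φ.subst g).bar := by
  cases φ <;> simp [Formula.bar, Formula.subst, ETerm.subst_bar]

/-! #### Semantic lemmas -/

lemma litI_bar {A : Type} (M : Interp A) (l : Lit) : M.litI l.bar = (M.litI l)ᶜ := by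
  cases l <;> simp [Interp.litI, Lit.bar]
lemma blitI_bar {A : Type} (M : Interp A) (t : BLit) : M.blitI t.bar = (M.blitI t)ᶜ := by
  cases t <;> simp [Interp.blitI, BLit.bar]
lemma etermI_bar {A : Type} (M : Interp A) (e : ETerm) : M.etermI e.bar = (M.etermI e)ᶜ := by
  cases e with
  | lit l => simp [ETerm.bar, Interp.etermI, litI_bar]
  | ex l t => ext a; simp [ETerm.bar, Interp.etermI, blitI_bar]
  | al l t => ext a; simp [ETerm.bar, Interp.etermI, blitI_bar]

lemma sat_swap {A : Type} (M : Interp A) (φ : Formula) : M.Sat φ.swap ↔ M.Sat φ := by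
  cases φ with
  | ex e f =>
      show (M.etermI f ∩ M.etermI e).Nonempty ↔ (M.etermI e ∩ M.etermI f).Nonempty
      rw [Set.inter_comm]
  | al e f =>
      show M.etermI f.bar ⊆ M.etermI e.bar ↔ M.etermI e ⊆ M.etermI f
      rw [etermI_bar, etermI_bar, Set.compl_subset_compl]

lemma sat_equiv {A : Type} (M : Interp A) {φ ψ : Formula} (h : FormEquiv φ ψ) :
    M.Sat φ ↔ M.Sat ψ := by
  rcases h with rfl | rfl
  · exact Iff.rfl
  · exact (sat_swap M φ).symm

lemma sat_bar_not {A : Type} (M : Interp A) (φ : Formula)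
    (h1 : M.Sat φ) (h2 : M.Sat φ.bar) : False := by
  cases φ with
  | ex e f =>
      obtain ⟨a, ha, hf⟩ := h1
      have h3 : a ∈ M.etermI f.bar := h2 ha
      rw [etermI_bar] at h3
      exact h3 hf
  | al e f =>
      obtain ⟨a, ha, hf⟩ := h2
      rw [etermI_bar] at hf
      exact hf (h1 ha)

lemma sat_fAll {A : Type} {M : Interp A} {p : ℕ} {l : Lit} :
    M.Sat (fAll p l) ↔ ∀ x, x ∈ M.up p → x ∈ M.litI l := Iff.rfl

lemma sat_fEx {A : Type} {M : Interp A} {p : ℕ} {l : Lit} :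
    M.Sat (fEx p l) ↔ ∃ x, x ∈ M.up p ∧ x ∈ M.litI l := Iff.rfl

lemma semD1 {A : Type} {M : Interp A} {p q : ℕ} {l : Lit}
    (h1 : M.Sat (fAll q l)) (h2 : M.Sat (fEx p (.pos q))) : M.Sat (fEx p l) := by
  obtain ⟨x, hxp, hxq⟩ := sat_fEx.mp h2
  exact sat_fEx.mpr ⟨x, hxp, sat_fAll.mp h1 x hxq⟩

lemma semD2 {A : Type} {M : Interp A} {p q : ℕ} {l : Lit}
    (h1 : M.Sat (fEx p l)) (h2 : M.Sat (fAll p (.pos q))) : M.Sat (fEx q l) := by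
  obtain ⟨x, hxp, hxl⟩ := sat_fEx.mp h1
  exact sat_fEx.mpr ⟨x, sat_fAll.mp h2 x hxp, hxl⟩

lemma semD3 {A : Type} {M : Interp A} {p q : ℕ} {l : Lit}
    (h1 : M.Sat (fAll q l.bar)) (h2 : M.Sat (fEx p l)) : M.Sat (fEx p (.neg q)) := by
  obtain ⟨x, hxp, hxl⟩ := sat_fEx.mp h2
  refine sat_fEx.mpr ⟨x, hxp, ?_⟩
  intro hxq
  have h3 := sat_fAll.mp h1 x hxq
  rw [litI_bar] at h3
  exact h3 hxl

lemma semB {A : Type} {M : Interp A} {p q : ℕ} {l : Lit}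
    (h1 : M.Sat (fAll p (.pos q))) (h2 : M.Sat (fAll q l)) : M.Sat (fAll p l) :=
  sat_fAll.mpr fun x hxp => sat_fAll.mp h2 x (sat_fAll.mp h1 x hxp)

lemma semA {A : Type} {M : Interp A} {p : ℕ} {l : Lit}
    (h : M.Sat (fAll p (.neg p))) : M.Sat (fAll p l) :=
  sat_fAll.mpr fun x hxp => absurd hxp (sat_fAll.mp h x hxp)

lemma semT {A : Type} {M : Interp A} {p : ℕ} : M.Sat (fAll p (.pos p)) :=
  sat_fAll.mpr fun _ h => h

lemma semI {A : Type} {M : Interp A} {p : ℕ} {l : Lit}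
    (h : M.Sat (fEx p l)) : M.Sat (fEx p (.pos p)) := by
  obtain ⟨x, hxp, _⟩ := sat_fEx.mp h
  exact sat_fEx.mpr ⟨x, hxp, hxp⟩

/-! #### Soundness -/

theorem soundS {Θ : Set Formula} {θ : Formula} (h : Derives RuleSetS Θ θ) :
    Entails Θ θ := by
  induction h with
  | mem h => exact fun A _ M hM => hM _ h
  | ident h1 h2 ih => exact fun A hA M hM => (sat_equiv M h2).mp (ih A hA M hM)
  | rule R g hR hants ih =>
      intro A hA M hM
      have IH : ∀ ψ ∈ R.ants, M.Sat (ψ.subst g) := fun ψ hψ => ih ψ hψ A hA M hM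
      rcases hR with ⟨p,q,l,rfl⟩|⟨p,q,l,rfl⟩|⟨p,q,l,rfl⟩|⟨p,q,l,rfl⟩|⟨p,l,rfl⟩|⟨p,rfl⟩|⟨p,l,rfl⟩|⟨φ,ψ,hφ,hψ,rfl⟩
      · have h1 : M.Sat (fAll (g.u q) (l.subst g)) :=
          IH (.al (atomE q) (.lit l)) (by simp)
        have h2 : M.Sat (fEx (g.u p) (.pos (g.u q))) :=
          IH (.ex (atomE p) (atomE q)) (by simp)
        exact semD1 h1 h2
      · have h1 : M.Sat (fEx (g.u p) (l.subst g)) :=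
          IH (.ex (atomE p) (.lit l)) (by simp)
        have h2 : M.Sat (fAll (g.u p) (.pos (g.u q))) :=
          IH (.al (atomE p) (atomE q)) (by simp)
        exact semD2 h1 h2
      · have h1 : M.Sat (fAll (g.u q) ((l.subst g).bar)) := by
          have h0 : M.Sat (fAll (g.u q) ((l.bar).subst g)) :=
            IH (.al (atomE q) (.lit l.bar)) (by simp)
          rwa [Lit.subst_bar] at h0
        have h2 : M.Sat (fEx (g.u p) (l.subst g)) :=
          IH (.ex (atomE p) (.lit l)) (by simp)
        exact semD3 h1 h2
      · have h1 : M.Sat (fAll (g.u p) (.pos (g.u q))) :=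
          IH (.al (atomE p) (atomE q)) (by simp)
        have h2 : M.Sat (fAll (g.u q) (l.subst g)) :=
          IH (.al (atomE q) (.lit l)) (by simp)
        exact semB h1 h2
      · have h1 : M.Sat (fAll (g.u p) (.neg (g.u p))) :=
          IH (.al (atomE p) (.lit (.neg p))) (by simp)
        exact semA h1
      · exact semT
      · have h1 : M.Sat (fEx (g.u p) (l.subst g)) :=
          IH (.ex (atomE p) (.lit l)) (by simp)
        exact semI h1
      · have h1 : M.Sat (ψ.subst g) := IH ψ (by simp)
        have h2 : M.Sat ((ψ.bar).subst g) := IH ψ.bar (by simp)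
        rw [Formula.subst_bar] at h2
        exact absurd h2 (fun h2 => sat_bar_not M _ h1 h2)

/-! #### Derivation helpers -/

lemma applyRule {Θ : Set Formula} {R : SylRule} (hR : R ∈ RuleSetS)
    (h : ∀ ψ ∈ R.ants, Derives RuleSetS Θ ψ) : Derives RuleSetS Θ R.con := by
  have := Derives.rule (X := RuleSetS) R idSubst hR (fun ψ hψ => by
    rw [Formula.subst_id]; exact h ψ hψ)
  rwa [Formula.subst_id] at this

lemma dT {Θ : Set Formula} (p : ℕ) : Derives RuleSetS Θ (fAll p (.pos p)) :=
  applyRule (R := ⟨∅, .al (atomE p) (atomE p)⟩)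
    (Or.inr (Or.inr (Or.inr (Or.inr (Or.inr (Or.inl ⟨p, rfl⟩))))))
    (by intro ψ hψ; simp at hψ)

lemma dB {Θ : Set Formula} {p q : ℕ} {l : Lit}
    (h1 : Derives RuleSetS Θ (fAll p (.pos q)))
    (h2 : Derives RuleSetS Θ (fAll q l)) : Derives RuleSetS Θ (fAll p l) :=
  applyRule
    (R := ⟨{.al (atomE p) (atomE q), .al (atomE q) (.lit l)}, .al (atomE p) (.lit l)⟩)
    (Or.inr (Or.inr (Or.inr (Or.inl ⟨p, q, l, rfl⟩))))
    (by
      intro ψ hψ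
      simp only [Finset.mem_insert, Finset.mem_singleton] at hψ
      rcases hψ with rfl | rfl
      · exact h1
      · exact h2)

lemma dA {Θ : Set Formula} {p : ℕ} (l : Lit)
    (h : Derives RuleSetS Θ (fAll p (.neg p))) : Derives RuleSetS Θ (fAll p l) :=
  applyRule (R := ⟨{.al (atomE p) (.lit (.neg p))}, .al (atomE p) (.lit l)⟩)
    (Or.inr (Or.inr (Or.inr (Or.inr (Or.inl ⟨p, l, rfl⟩)))))
    (by
      intro ψ hψ
      simp only [Finset.mem_singleton] at hψ
      subst hψ; exact h)

lemma dI {Θ : Set Formula} {p : ℕ} {l : Lit}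
    (h : Derives RuleSetS Θ (fEx p l)) : Derives RuleSetS Θ (fEx p (.pos p)) :=
  applyRule (R := ⟨{.ex (atomE p) (.lit l)}, .ex (atomE p) (atomE p)⟩)
    (Or.inr (Or.inr (Or.inr (Or.inr (Or.inr (Or.inr (Or.inl ⟨p, l, rfl⟩)))))))
    (by
      intro ψ hψ
      simp only [Finset.mem_singleton] at hψ
      subst hψ; exact h)

lemma dD1 {Θ : Set Formula} {p q : ℕ} {l : Lit}
    (h1 : Derives RuleSetS Θ (fAll q l))
    (h2 : Derives RuleSetS Θ (fEx p (.pos q))) : Derives RuleSetS Θ (fEx p l) :=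
  applyRule
    (R := ⟨{.al (atomE q) (.lit l), .ex (atomE p) (atomE q)}, .ex (atomE p) (.lit l)⟩)
    (Or.inl ⟨p, q, l, rfl⟩)
    (by
      intro ψ hψ
      simp only [Finset.mem_insert, Finset.mem_singleton] at hψ
      rcases hψ with rfl | rfl
      · exact h1
      · exact h2)

lemma dD2 {Θ : Set Formula} {p q : ℕ} {l : Lit}
    (h1 : Derives RuleSetS Θ (fEx p l))
    (h2 : Derives RuleSetS Θ (fAll p (.pos q))) : Derives RuleSetS Θ (fEx q l) :=
  applyRule
    (R := ⟨{.ex (atomE p) (.lit l), .al (atomE p) (atomE q)}, .ex (atomE q) (.lit l)⟩)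
    (Or.inr (Or.inl ⟨p, q, l, rfl⟩))
    (by
      intro ψ hψ
      simp only [Finset.mem_insert, Finset.mem_singleton] at hψ
      rcases hψ with rfl | rfl
      · exact h1
      · exact h2)

lemma dD3 {Θ : Set Formula} {p q : ℕ} {l : Lit}
    (h1 : Derives RuleSetS Θ (fAll q l.bar))
    (h2 : Derives RuleSetS Θ (fEx p l)) : Derives RuleSetS Θ (fEx p (.neg q)) :=
  applyRule
    (R := ⟨{.al (atomE q) (.lit l.bar), .ex (atomE p) (.lit l)},
           .ex (atomE p) (.lit (.neg q))⟩)
    (Or.inr (Or.inr (Or.inl ⟨p, q, l, rfl⟩)))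
    (by
      intro ψ hψ
      simp only [Finset.mem_insert, Finset.mem_singleton] at hψ
      rcases hψ with rfl | rfl
      · exact h1
      · exact h2)

lemma dSwapEx {Θ : Set Formula} {p q : ℕ}
    (h : Derives RuleSetS Θ (fEx p (.pos q))) : Derives RuleSetS Θ (fEx q (.pos p)) :=
  h.ident (Or.inr rfl)

lemma dSwapAl {Θ : Set Formula} {p q : ℕ}
    (h : Derives RuleSetS Θ (fAll p (.neg q))) : Derives RuleSetS Θ (fAll q (.neg p)) :=
  h.ident (Or.inr rfl)

/-- Inconsistency of `Θ` w.r.t. `⊢_S`. -/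
def Incon (Θ : Set Formula) : Prop :=
  ∃ ψ, ψ ∈ FragS ∧ Derives RuleSetS Θ ψ ∧ Derives RuleSetS Θ ψ.bar

lemma dOfIncon {Θ : Set Formula} (h : Incon Θ) {φ : Formula} (hφ : φ ∈ FragS) :
    Derives RuleSetS Θ φ := by
  obtain ⟨ψ, hψ, h1, h2⟩ := h
  exact applyRule (R := ⟨{ψ, ψ.bar}, φ⟩)
    (Or.inr (Or.inr (Or.inr (Or.inr (Or.inr (Or.inr (Or.inr ⟨φ, ψ, hφ, hψ, rfl⟩)))))))
    (by
      intro χ hχ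
      simp only [Finset.mem_insert, Finset.mem_singleton] at hχ
      rcases hχ with rfl | rfl
      · exact h1
      · exact h2)

lemma inconOfExAll {Θ : Set Formula} {p : ℕ} {l : Lit}
    (h1 : Derives RuleSetS Θ (fEx p l))
    (h2 : Derives RuleSetS Θ (fAll p l.bar)) : Incon Θ :=
  ⟨fAll p l.bar, fAll_mem p l.bar, h2, by
    show Derives RuleSetS Θ (.ex (atomE p) (.lit l.bar.bar))
    rw [Lit.bar_bar]; exact h1⟩

/-! #### The canonical models -/

/-- `lsat v l`: a point with atomic valuation `v` satisfies the literal `l`. -/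
def lsat (v : ℕ → Prop) : Lit → Prop
  | .pos q => v q
  | .neg q => ¬ v q

/-- A structure on `ι` from an atomic valuation, with empty binary relations. -/
def mkI {ι : Type} (V : ι → ℕ → Prop) : Interp ι :=
  ⟨fun q => {x | V x q}, fun _ => ∅⟩

lemma mkI_litI {ι : Type} (V : ι → ℕ → Prop) (x : ι) (l : Lit) :
    x ∈ (mkI V).litI l ↔ lsat (V x) l := by
  cases l <;> simp [mkI, Interp.litI, lsat]

lemma mkI_sat_fAll {ι : Type} (V : ι → ℕ → Prop) (p : ℕ) (l : Lit) :
    (mkI V).Sat (fAll p l) ↔ ∀ x, V x p → lsat (V x) l := by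
  rw [sat_fAll]
  exact ⟨fun h x hx => (mkI_litI V x l).mp (h x hx),
         fun h x hx => (mkI_litI V x l).mpr (h x hx)⟩

lemma mkI_sat_fEx {ι : Type} (V : ι → ℕ → Prop) (p : ℕ) (l : Lit) :
    (mkI V).Sat (fEx p l) ↔ ∃ x, V x p ∧ lsat (V x) l := by
  rw [sat_fEx]
  exact ⟨fun ⟨x, h1, h2⟩ => ⟨x, h1, (mkI_litI V x l).mp h2⟩,
         fun ⟨x, h1, h2⟩ => ⟨x, h1, (mkI_litI V x l).mpr h2⟩⟩

/-- Canonical witnessing points: derivable existentials. -/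
def Pt (Θ : Set Formula) : Type :=
  {x : ℕ × Lit // Derives RuleSetS Θ (fEx x.1 x.2)}

/-- Valuation from a "type assignment" `E`. -/
def VV (Θ : Set Formula) (E : Option (Pt Θ) → ℕ → Prop)
    (x : Option (Pt Θ)) (s : ℕ) : Prop :=
  ∃ a, E x a ∧ Derives RuleSetS Θ (fAll a (.pos s))

/-- Base types of a canonical point. -/
def baseE {Θ : Set Formula} (y : Pt Θ) (a : ℕ) : Prop :=
  a = y.1.1 ∨ ∃ c, y.1.2 = .pos c ∧ a = c

lemma basePair {Θ : Set Formula} (y : Pt Θ) {a b : ℕ}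
    (ha : baseE y a) (hb : baseE y b) : Derives RuleSetS Θ (fEx a (.pos b)) := by
  obtain ⟨⟨q, m⟩, hy⟩ := y
  rcases ha with rfl | ⟨c, hc, rfl⟩ <;> rcases hb with rfl | ⟨c', hc', rfl⟩
  · exact dI hy
  · simp only at hc'
    subst hc'; exact hy
  · simp only at hc
    subst hc; exact dSwapEx hy
  · simp only at hc hc'
    subst hc
    cases hc'
    exact dI (dSwapEx hy)

lemma baseCoh {Θ : Set Formula} (hcon : ¬ Incon Θ) (y : Pt Θ) {a b q2 : ℕ}
    (ha : baseE y a) (hb : baseE y b)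
    (h1 : Derives RuleSetS Θ (fAll a (.pos q2)))
    (h2 : Derives RuleSetS Θ (fAll b (.neg q2))) : False :=
  hcon (inconOfExAll (l := .pos b) (basePair y ha hb) (dB h1 (dSwapAl h2)))

/-- The generic satisfaction lemma for the canonical models. -/
lemma genSat {Θ : Set Formula} (hΘ : Θ ⊆ FragS) (E : Option (Pt Θ) → ℕ → Prop)
    (coh : ∀ x a b q2, E x a → E x b → Derives RuleSetS Θ (fAll a (.pos q2)) →
      Derives RuleSetS Θ (fAll b (.neg q2)) → False)
    (hq : ∀ y : Pt Θ, E (some y) y.1.1)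
    (hq' : ∀ (y : Pt Θ) (c : ℕ), y.1.2 = .pos c → E (some y) c)
    (havoid : ∀ (y : Pt Θ) (c : ℕ), y.1.2 = .neg c → ∀ a, E (some y) a →
      Derives RuleSetS Θ (fAll a (.pos c)) → False) :
    (mkI (VV Θ E)).SatSet Θ := by
  intro φ hφ
  obtain ⟨p, l, hnf⟩ := normalizeS (hΘ hφ)
  rcases hnf with hnf | hnf
  · refine (sat_equiv _ (formEquiv_symm hnf)).mp ?_
    have hd : Derives RuleSetS Θ (fEx p l) := (Derives.mem hφ).ident hnf
    refine (mkI_sat_fEx _ _ _).mpr ?_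
    refine ⟨some ⟨(p, l), hd⟩, ⟨p, hq _, dT p⟩, ?_⟩
    cases l with
    | pos c => exact ⟨c, hq' _ c rfl, dT c⟩
    | neg c =>
        intro hc
        obtain ⟨a, ha, hda⟩ := hc
        exact havoid _ c rfl a ha hda
  · refine (sat_equiv _ (formEquiv_symm hnf)).mp ?_
    have hd : Derives RuleSetS Θ (fAll p l) := (Derives.mem hφ).ident hnf
    refine (mkI_sat_fAll _ _ _).mpr ?_
    rintro x ⟨a, ha, hap⟩
    have hal := dB hap hd
    cases l with
    | pos q2 => exact ⟨a, ha, hal⟩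
    | neg q2 =>
        intro hc
        obtain ⟨b, hb, hbq⟩ := hc
        exact coh x b a q2 hb ha hbq hal

/-! #### Countermodels for the four normal forms -/

lemma caseAllPos {Θ : Set Formula} (hΘ : Θ ⊆ FragS) {p0 q1 : ℕ}
    (hnd : ¬ Derives RuleSetS Θ (fAll p0 (.pos q1))) :
    ∃ M : Interp (Option (Pt Θ)), M.SatSet Θ ∧ ¬ M.Sat (fAll p0 (.pos q1)) := by
  have hcon : ¬ Incon Θ := fun h => hnd (dOfIncon h (fAll_mem _ _))
  refine ⟨mkI (VV Θ (fun x a => match x with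
    | none => a = p0
    | some y => baseE y a)), ?_, ?_⟩
  · refine genSat hΘ _ ?_ (fun y => Or.inl rfl) (fun y c h => Or.inr ⟨c, h, rfl⟩) ?_
    · rintro (_ | y) a b q2 ha hb h1 h2
      · simp only at ha hb
        subst ha; subst hb
        exact hnd (dA _ (dB h1 (dSwapAl h2)))
      · exact baseCoh hcon y ha hb h1 h2
    · rintro y c hm a ha hda
      rcases ha with rfl | ⟨c', hc', rfl⟩
      · refine hcon (inconOfExAll (l := .neg c) ?_ hda)
        rw [← hm]; exact y.2
      · rw [hm] at hc'; cases hc'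
  · intro hs
    rw [mkI_sat_fAll] at hs
    have h0 := hs none ⟨p0, rfl, dT p0⟩
    obtain ⟨a, ha, hda⟩ := h0
    simp only at ha
    subst ha
    exact hnd hda

lemma caseAllNeg {Θ : Set Formula} (hΘ : Θ ⊆ FragS) {p0 q1 : ℕ}
    (hnd : ¬ Derives RuleSetS Θ (fAll p0 (.neg q1))) :
    ∃ M : Interp (Option (Pt Θ)), M.SatSet Θ ∧ ¬ M.Sat (fAll p0 (.neg q1)) := by
  have hcon : ¬ Incon Θ := fun h => hnd (dOfIncon h (fAll_mem _ _))
  refine ⟨mkI (VV Θ (fun x a => match x with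
    | none => a = p0 ∨ a = q1
    | some y => baseE y a)), ?_, ?_⟩
  · refine genSat hΘ _ ?_ (fun y => Or.inl rfl) (fun y c h => Or.inr ⟨c, h, rfl⟩) ?_
    · rintro (_ | y) a b q2 ha hb h1 h2
      · have hab : Derives RuleSetS Θ (fAll a (.neg b)) := dB h1 (dSwapAl h2)
        simp only at ha hb
        rcases ha with rfl | rfl <;> rcases hb with rfl | rfl
        · exact hnd (dA _ hab)
        · exact hnd hab
        · exact hnd (dSwapAl hab)
        · exact hnd (dSwapAl (dA (.neg p0) hab))
      · exact baseCoh hcon y ha hb h1 h2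
    · rintro y c hm a ha hda
      rcases ha with rfl | ⟨c', hc', rfl⟩
      · refine hcon (inconOfExAll (l := .neg c) ?_ hda)
        rw [← hm]; exact y.2
      · rw [hm] at hc'; cases hc'
  · intro hs
    rw [mkI_sat_fAll] at hs
    have h0 := hs none ⟨p0, Or.inl rfl, dT p0⟩
    exact h0 ⟨q1, Or.inr rfl, dT q1⟩

lemma caseExPos {Θ : Set Formula} (hΘ : Θ ⊆ FragS) {p0 q1 : ℕ}
    (hnd : ¬ Derives RuleSetS Θ (fEx p0 (.pos q1))) :
    ∃ M : Interp (Option (Pt Θ)), M.SatSet Θ ∧ ¬ M.Sat (fEx p0 (.pos q1)) := by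
  have hcon : ¬ Incon Θ := fun h => hnd (dOfIncon h (fEx_mem _ _))
  refine ⟨mkI (VV Θ (fun x a => match x with
    | none => False
    | some y => baseE y a)), ?_, ?_⟩
  · refine genSat hΘ _ ?_ (fun y => Or.inl rfl) (fun y c h => Or.inr ⟨c, h, rfl⟩) ?_
    · rintro (_ | y) a b q2 ha hb h1 h2
      · exact ha
      · exact baseCoh hcon y ha hb h1 h2
    · rintro y c hm a ha hda
      rcases ha with rfl | ⟨c', hc', rfl⟩
      · refine hcon (inconOfExAll (l := .neg c) ?_ hda)
        rw [← hm]; exact y.2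
      · rw [hm] at hc'; cases hc'
  · intro hs
    rw [mkI_sat_fEx] at hs
    obtain ⟨x, hxp, hxq⟩ := hs
    cases x with
    | none => obtain ⟨a, ha, -⟩ := hxp; exact ha
    | some y =>
        obtain ⟨a, ha, hap⟩ := hxp
        obtain ⟨b, hb, hbq⟩ := hxq
        exact hnd (dD2 (dD1 hbq (basePair y ha hb)) hap)

/-- The obstruction predicate used for the `∃(p, q̄)` countermodel. -/
def OutP {Θ : Set Formula} (q1 : ℕ) (y : Pt Θ) : Prop :=
  Derives RuleSetS Θ (fAll y.1.1 (.neg q1)) ∨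
  (∃ c, y.1.2 = .pos c ∧ Derives RuleSetS Θ (fAll c (.neg q1))) ∨
  (∃ c, y.1.2 = .neg c ∧ Derives RuleSetS Θ (fAll q1 (.pos c))) ∨
  Derives RuleSetS Θ (fAll q1 (.neg q1))

lemma caseExNeg {Θ : Set Formula} (hΘ : Θ ⊆ FragS) {p0 q1 : ℕ}
    (hnd : ¬ Derives RuleSetS Θ (fEx p0 (.neg q1))) :
    ∃ M : Interp (Option (Pt Θ)), M.SatSet Θ ∧ ¬ M.Sat (fEx p0 (.neg q1)) := by
  have hcon : ¬ Incon Θ := fun h => hnd (dOfIncon h (fEx_mem _ _))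
  refine ⟨mkI (VV Θ (fun x a => match x with
    | none => False
    | some y => baseE y a ∨ (¬ OutP q1 y ∧ a = q1))), ?_, ?_⟩
  · refine genSat hΘ _ ?_ (fun y => Or.inl (Or.inl rfl))
      (fun y c h => Or.inl (Or.inr ⟨c, h, rfl⟩)) ?_
    · rintro (_ | y) a b q2 ha hb h1 h2
      · exact ha
      · rcases ha with ha | ⟨hna, haeq⟩ <;> rcases hb with hb | ⟨hnb, hbeq⟩
        · exact baseCoh hcon y ha hb h1 h2
        · have hab : Derives RuleSetS Θ (fAll a (.neg b)) := dB h1 (dSwapAl h2)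
          rw [hbeq] at hab
          rcases ha with rfl | ⟨c, hc, rfl⟩
          · exact hnb (Or.inl hab)
          · exact hnb (Or.inr (Or.inl ⟨a, hc, hab⟩))
        · have hab : Derives RuleSetS Θ (fAll b (.neg a)) := dSwapAl (dB h1 (dSwapAl h2))
          rw [haeq] at hab
          rcases hb with rfl | ⟨c, hc, rfl⟩
          · exact hna (Or.inl hab)
          · exact hna (Or.inr (Or.inl ⟨b, hc, hab⟩))
        · have hab : Derives RuleSetS Θ (fAll a (.neg b)) := dB h1 (dSwapAl h2)
          rw [haeq, hbeq] at hab
          exact hna (Or.inr (Or.inr (Or.inr hab)))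
    · rintro y c hm a ha hda
      rcases ha with ha | ⟨hna, haeq⟩
      · rcases ha with rfl | ⟨c', hc', rfl⟩
        · refine hcon (inconOfExAll (l := .neg c) ?_ hda)
          rw [← hm]; exact y.2
        · rw [hm] at hc'; cases hc'
      · rw [haeq] at hda
        exact hna (Or.inr (Or.inr (Or.inl ⟨c, hm, hda⟩)))
  · intro hs
    rw [mkI_sat_fEx] at hs
    obtain ⟨x, hxp, hxn⟩ := hs
    cases x with
    | none => obtain ⟨a, ha, -⟩ := hxp; exact ha
    | some y =>
        obtain ⟨a, ha, hap⟩ := hxp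
        by_cases hout : OutP q1 y
        · have ha' : baseE y a := by
            rcases ha with ha | ⟨hna, haeq⟩
            · exact ha
            · exact absurd hout hna
          rcases hout with h | ⟨c, hc, h⟩ | ⟨c, hc, h⟩ | h
          · exact hnd (dD2 (dD1 h (basePair y ha' (Or.inl rfl))) hap)
          · exact hnd (dD2 (dD1 h (basePair y ha' (Or.inr ⟨c, hc, rfl⟩))) hap)
          · have hy' : Derives RuleSetS Θ (fEx y.1.1 (.neg c)) := by
              rw [← hc]; exact y.2
            have ha'' : a = y.1.1 := by
              rcases ha' with rfl | ⟨c'', hc'', rfl⟩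
              · rfl
              · rw [hc] at hc''; cases hc''
            subst ha''
            exact hnd (dD2 (dD3 (l := .neg c) h hy') hap)
          · have hda := dA (.neg a) h
            exact hnd (dD2 (dD3 (l := .pos a) hda (basePair y ha' ha')) hap)
        · exact hxn ⟨q1, Or.inr ⟨hout, rfl⟩, dT q1⟩


/-- `⊢_S` is sound and complete for the fragment `S`. -/
theorem S_sound_and_complete (Θ : Set Formula) (θ : Formula)
    (hΘ : Θ ⊆ FragS) (hθ : θ ∈ FragS) :
    Derives RuleSetS Θ θ ↔ Entails Θ θ := by
  constructor
  · exact soundS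
  · intro hent
    by_contra hnd
    obtain ⟨p0, l0, hc⟩ := normalizeS hθ
    rcases hc with hnf | hnf
    · have hnd' : ¬ Derives RuleSetS Θ (fEx p0 l0) :=
        fun h => hnd (h.ident (formEquiv_symm hnf))
      cases l0 with
      | pos q1 =>
          obtain ⟨M, hMs, hMn⟩ := caseExPos hΘ hnd'
          exact hMn ((sat_equiv M hnf).mp (hent _ ⟨none⟩ M hMs))
      | neg q1 =>
          obtain ⟨M, hMs, hMn⟩ := caseExNeg hΘ hnd'
          exact hMn ((sat_equiv M hnf).mp (hent _ ⟨none⟩ M hMs))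
    · have hnd' : ¬ Derives RuleSetS Θ (fAll p0 l0) :=
        fun h => hnd (h.ident (formEquiv_symm hnf))
      cases l0 with
      | pos q1 =>
          obtain ⟨M, hMs, hMn⟩ := caseAllPos hΘ hnd'
          exact hMn ((sat_equiv M hnf).mp (hent _ ⟨none⟩ M hMs))
      | neg q1 =>
          obtain ⟨M, hMs, hMn⟩ := caseAllNeg hΘ hnd'
          exact hMn ((sat_equiv M hnf).mp (hent _ ⟨none⟩ M hMs))


end Syllogistic
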